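/- arXiv:1905.01728 — 3 statements merged into one kernel-verified Lean document; each statement's English description precedes it below -/
import Mathlib

section
/- Let a ≥ b ≥ c > 0 and define G(a,b,c) = E[a²X²/√(a²X² + b²Y² + c²Z²)] where X, Y, Z are independent standard Gaussian random variables. Then G(a,b,c) ≥ G(b,a,c) ≥ G(c,a,b), with equality in the first inequality iff a = b and in the second iff b = c. -/
open MeasureTheory ProbabilityTheory

/-- The product of three standard Gaussian measures on `ℝ × ℝ × ℝ`,
modelling i.i.d. standard normals `X, Y, Z`. -/
noncomputable def gauss3 : Measure (ℝ × ℝ × ℝ) :=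
  (gaussianReal 0 1).prod ((gaussianReal 0 1).prod (gaussianReal 0 1))

/-- `G(a,b,c) = E[a²X²/√(a²X² + b²Y² + c²Z²)]`. -/
noncomputable def Gfun (a b c : ℝ) : ℝ :=
  ∫ p : ℝ × ℝ × ℝ,
    a ^ 2 * p.1 ^ 2 / Real.sqrt (a ^ 2 * p.1 ^ 2 + b ^ 2 * p.2.1 ^ 2 + c ^ 2 * p.2.2 ^ 2)
    ∂gauss3

/-! Both claims are instances of `G(b,a,c) ≤ G(a,b,c)` for `0 < b ≤ a`, strict when `b < a`,
because `X, Y, Z` are exchangeable: `G(a,b,c) = G(a,c,b)`. Exchanging `X` and `Y` turns the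
integrand of `G(b,a,c)` into `b²Y²/√S` with `S = a²X² + b²Y² + c²Z²`, so symmetrizing
`G(a,b,c) - G(b,a,c)` under `X ↔ Y` leaves the pointwise inequality
`(Au - Bv)/√(Au + Bv + s) + (Av - Bu)/√(Av + Bu + s) > 0` for `0 < B < A`, `u > 0`, `v, s ≥ 0`.
Since `(x - y)/√T = √T - (2y + s)/√T` with `T = x + y + s`, the map `x ↦ (x - y)/√(x + y + s)`
is strictly increasing, and the left side exceeds its value at `A = B`, which is `0`. -/

open Set Real

lemma strictMonoOn_sqrt_sub_div_sqrt {k : ℝ} (hk : 0 ≤ k) :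
    StrictMonoOn (fun t => √t - k / √t) (Ioi 0) := by
  intro t ht t' _ htt'
  have hsqrt : √t < √t' := Real.sqrt_lt_sqrt (le_of_lt ht) htt'
  have hdiv : k / √t' ≤ k / √t :=
    div_le_div_of_nonneg_left hk (Real.sqrt_pos.2 ht) hsqrt.le
  simp only
  linarith

lemma strictMonoOn_sub_div_sqrt_add {y s : ℝ} (h : 0 ≤ 2 * y + s) :
    StrictMonoOn (fun x => (x - y) / √(x + y + s)) (Ioi (-(y + s))) := by
  have hform : ∀ x, (x - y) / √(x + y + s) = √(x + y + s) - (2 * y + s) / √(x + y + s) := by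
    intro x
    rw [show x - y = (x + y + s) - (2 * y + s) by ring, sub_div, Real.div_sqrt]
  intro x hx x' hx' hxx'
  simp only [hform]
  exact strictMonoOn_sqrt_sub_div_sqrt h (by simp at hx ⊢; linarith) (by simp at hx' ⊢; linarith)
    (by linarith)

lemma add_sub_div_sqrt_pos {A B u v s : ℝ} (hB : 0 < B) (hBA : B < A) (hu : 0 < u) (hv : 0 ≤ v)
    (hs : 0 ≤ s) :
    0 < (A * u - B * v) / √(A * u + B * v + s) + (A * v - B * u) / √(A * v + B * u + s) := by
  have hBu : 0 < B * u := mul_pos hB hu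
  have hBv : 0 ≤ B * v := mul_nonneg hB.le hv
  have hmono_u := strictMonoOn_sub_div_sqrt_add (y := B * v) (s := s) (by positivity)
  have hmono_v := (strictMonoOn_sub_div_sqrt_add (y := B * u) (s := s) (by positivity)).monotoneOn
  have hu' : B * u < A * u := mul_lt_mul_of_pos_right hBA hu
  have hv' : B * v ≤ A * v := mul_le_mul_of_nonneg_right hBA.le hv
  calc (0 : ℝ)
        = (B * u - B * v) / √(B * u + B * v + s) + (B * v - B * u) / √(B * v + B * u + s) := by
        rw [add_comm (B * v) (B * u)]; ring
    _ < _ := add_lt_add_of_lt_of_le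
        (hmono_u (by simp; linarith) (by simp; linarith) hu')
        (hmono_v (by simp; linarith) (by simp; linarith) hv')

section Symmetrization

variable {α : Type*} [MeasurableSpace α] {μ : Measure α} {f : α → ℝ}

lemma integral_pos_of_ae_pos [NeZero μ] (hf : Integrable f μ) (h : ∀ᵐ x ∂μ, 0 < f x) :
    0 < ∫ x, f x ∂μ := by
  have hnonneg : 0 ≤ᵐ[μ] f := h.mono fun _ hx => hx.le
  refine (integral_nonneg_of_ae hnonneg).lt_of_ne fun h0 => ?_
  obtain ⟨x, hx, hx0⟩ := (h.and ((integral_eq_zero_iff_of_nonneg_ae hnonneg hf).1 h0.symm)).exists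
  exact hx.ne' hx0

lemma integral_pos_of_ae_add_comp_pos [NeZero μ] {e : α ≃ᵐ α} (he : MeasurePreserving e μ μ)
    (hf : Integrable f μ) (h : ∀ᵐ x ∂μ, 0 < f x + f (e x)) : 0 < ∫ x, f x ∂μ := by
  have hfe : Integrable (fun x => f (e x)) μ := (he.integrable_comp_emb e.measurableEmbedding).2 hf
  have hpos := integral_pos_of_ae_pos (f := fun x => f x + f (e x)) (hf.add hfe) h
  rw [integral_add hf hfe, he.integral_comp' f] at hpos
  linarith

end Symmetrization

section ProdComm

variable {α β γ : Type*} [MeasurableSpace α] [MeasurableSpace β] [MeasurableSpace γ]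

def MeasurableEquiv.prodLeftComm : α × β × γ ≃ᵐ β × α × γ :=
  MeasurableEquiv.prodAssoc.symm.trans
    ((MeasurableEquiv.prodComm.prodCongr (MeasurableEquiv.refl γ)).trans MeasurableEquiv.prodAssoc)

@[simp]
lemma MeasurableEquiv.prodLeftComm_apply (p : α × β × γ) :
    MeasurableEquiv.prodLeftComm p = (p.2.1, p.1, p.2.2) := rfl

lemma measurePreserving_prodLeftComm (μ : Measure α) (ν : Measure β) (τ : Measure γ)
    [SFinite μ] [SFinite ν] [SFinite τ] :
    MeasurePreserving MeasurableEquiv.prodLeftComm (μ.prod (ν.prod τ)) (ν.prod (μ.prod τ)) :=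
  (measurePreserving_prodAssoc ν μ τ).comp <|
    (Measure.measurePreserving_swap.prod (MeasurePreserving.id τ)).comp <|
      (measurePreserving_prodAssoc μ ν τ).symm _

end ProdComm

instance : IsProbabilityMeasure gauss3 := by unfold gauss3; infer_instance

lemma ae_gauss3_fst_ne_zero : ∀ᵐ p ∂gauss3, p.1 ≠ 0 :=
  have := nullSingletonClass_gaussianReal (μ := 0) one_ne_zero
  Measure.quasiMeasurePreserving_fst.ae (Measure.ae_ne _ 0)

lemma div_sqrt_add_le_sqrt {t s : ℝ} (ht : 0 ≤ t) (hs : 0 ≤ s) : t / √(t + s) ≤ √t := by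
  rcases ht.eq_or_lt with rfl | ht
  · simp
  · calc t / √(t + s) ≤ t / √t :=
          div_le_div_of_nonneg_left ht.le (Real.sqrt_pos.2 ht) (Real.sqrt_le_sqrt (by linarith))
      _ = √t := Real.div_sqrt

lemma integrable_Gfun_integrand (a b c : ℝ) :
    Integrable (fun p : ℝ × ℝ × ℝ =>
      a ^ 2 * p.1 ^ 2 / √(a ^ 2 * p.1 ^ 2 + b ^ 2 * p.2.1 ^ 2 + c ^ 2 * p.2.2 ^ 2)) gauss3 := by
  have hX : Integrable (fun p : ℝ × ℝ × ℝ => |a * p.1|) gauss3 :=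
    ((memLp_id_gaussianReal 1).integrable le_rfl |>.const_mul a |>.abs).comp_fst _
  refine hX.mono' (by fun_prop : Measurable _).aestronglyMeasurable (ae_of_all _ fun p => ?_)
  rw [Real.norm_of_nonneg (by positivity), add_assoc, ← Real.sqrt_sq_eq_abs, mul_pow]
  exact div_sqrt_add_le_sqrt (by positivity) (by positivity)

lemma Gfun_swap_last (a b c : ℝ) : Gfun a b c = Gfun a c b := by
  have he : MeasurePreserving ((MeasurableEquiv.refl ℝ).prodCongr MeasurableEquiv.prodComm)
      gauss3 gauss3 :=
    (MeasurePreserving.id _).prod Measure.measurePreserving_swap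
  rw [Gfun, Gfun, ← he.integral_comp']
  refine integral_congr_ae (ae_of_all _ fun p => ?_)
  change a ^ 2 * p.1 ^ 2 / √(a ^ 2 * p.1 ^ 2 + b ^ 2 * p.2.2 ^ 2 + c ^ 2 * p.2.1 ^ 2) = _
  rw [add_right_comm]

lemma Gfun_swap_lt {a b : ℝ} (c : ℝ) (hb : b ≠ 0) (hba : b ^ 2 < a ^ 2) :
    Gfun b a c < Gfun a b c := by
  rw [← sub_pos, Gfun, Gfun, ← integral_sub (integrable_Gfun_integrand a b c)
    (integrable_Gfun_integrand b a c)]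
  refine integral_pos_of_ae_add_comp_pos (measurePreserving_prodLeftComm _ _ _)
    ((integrable_Gfun_integrand a b c).sub (integrable_Gfun_integrand b a c)) ?_
  filter_upwards [ae_gauss3_fst_ne_zero] with p hp
  convert add_sub_div_sqrt_pos (A := a ^ 2) (B := b ^ 2) (u := p.1 ^ 2) (v := p.2.1 ^ 2)
    (s := c ^ 2 * p.2.2 ^ 2) (by positivity) hba (by positivity) (by positivity) (by positivity)
    using 1
  simp only [MeasurableEquiv.prodLeftComm_apply]
  rw [add_comm (b ^ 2 * p.1 ^ 2), add_comm (b ^ 2 * p.2.1 ^ 2)]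
  ring

lemma Gfun_swap_le {a b : ℝ} (c : ℝ) (hb : 0 < b) (hba : b ≤ a) : Gfun b a c ≤ Gfun a b c := by
  rcases hba.lt_or_eq with hlt | rfl
  · exact (Gfun_swap_lt c hb.ne' (pow_lt_pow_left₀ hlt hb.le two_ne_zero)).le
  · rfl

lemma Gfun_eq_swap_iff {a b : ℝ} (c : ℝ) (hb : 0 < b) (hba : b ≤ a) :
    Gfun a b c = Gfun b a c ↔ a = b := by
  refine ⟨fun h => ?_, fun h => h ▸ rfl⟩
  by_contra hne
  have hlt : b ^ 2 < a ^ 2 := pow_lt_pow_left₀ (hba.lt_of_ne (Ne.symm hne)) hb.le two_ne_zero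
  exact (Gfun_swap_lt c hb.ne' hlt).ne' h

theorem stmt_2 (a b c : ℝ) (hab : a ≥ b) (hbc : b ≥ c) (hc : c > 0) :
    Gfun a b c ≥ Gfun b a c ∧ Gfun b a c ≥ Gfun c a b ∧
      (Gfun a b c = Gfun b a c ↔ a = b) ∧ (Gfun b a c = Gfun c a b ↔ b = c) := by
  have hb : 0 < b := hc.trans_le hbc
  refine ⟨Gfun_swap_le c hb hab, ?_, Gfun_eq_swap_iff c hb hab, ?_⟩ <;>
    rw [Gfun_swap_last b a c, Gfun_swap_last c a b]
  · exact Gfun_swap_le a hc hbc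
  · exact Gfun_eq_swap_iff a hc hbc
end

section
/- For positive reals a, b, c with a > b > c (pairwise distinct), the integral ∫_ℝ ∫_ℝ (s²t²-1) / [(a²s²+1)(b²s²+1)(c²s²+1)(t²/a²+1)(t²/b²+1)(t²/c²+1)]^{3/2} dt ds is nonzero (in fact strictly negative). -/
/-!
With `P(x) = ((a²x² + 1)(b²x² + 1)(c²x² + 1))^{3/2}` and
`Q(t) = ((t²/a² + 1)(t²/b² + 1)(t²/c² + 1))^{3/2}` the integrand is
`s²/P(s) · t²/Q(t) - 1/P(s) · 1/Q(t)`, so the double integral is a difference of products of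
one-dimensional integrals. The substitution `t = 1/x` gives `Q(1/x) = P(x) / ((abc)³ x⁹)`, hence
`∫₀^∞ tᵐ/Q = (abc)³ ∫₀^∞ x^{7-m}/P`, and by evenness the double integral equals
`4 (abc)³ (I₂ I₅ - I₀ I₇)` with `I_k = ∫₀^∞ xᵏ/P`. This is negative by Chebyshev's integral
inequality for the increasing functions `x²` and `x⁵` against the measure `dx / P(x)`.
-/

open MeasureTheory Set Real

lemma integral_integral_mul_sub_mul {α β : Type*} [MeasurableSpace α] [MeasurableSpace β]
    {μ : Measure α} {ν : Measure β} {f u : α → ℝ} {g v : β → ℝ} (hf : Integrable f μ)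
    (hg : Integrable g ν) (hu : Integrable u μ) (hv : Integrable v ν) :
    ∫ s, ∫ t, (f s * g t - u s * v t) ∂ν ∂μ =
      (∫ s, f s ∂μ) * (∫ t, g t ∂ν) - (∫ s, u s ∂μ) * (∫ t, v t ∂ν) := by
  simp_rw [integral_sub (hg.const_mul _) (hv.const_mul _), integral_const_mul]
  rw [integral_sub (hf.mul_const _) (hu.mul_const _), integral_mul_const, integral_mul_const]

lemma integral_eq_two_mul_setIntegral_Ioi_of_even {f : ℝ → ℝ} (hf : ∀ x, f (-x) = f x) :
    ∫ x, f x = 2 * ∫ x in Ioi 0, f x := by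
  rw [← integral_comp_abs]
  congr 1 with x
  rcases abs_choice x with h | h <;> rw [h]
  exact (hf x).symm

lemma StrictMonoOn.sub_mul_sub_pos {s : Set ℝ} {f g : ℝ → ℝ} (hf : StrictMonoOn f s)
    (hg : StrictMonoOn g s) {x y : ℝ} (hx : x ∈ s) (hy : y ∈ s) (hxy : x ≠ y) :
    0 < (f x - f y) * (g x - g y) := by
  rcases hxy.lt_or_gt with h | h
  · exact mul_pos_of_neg_of_neg (sub_neg.2 (hf hx hy h)) (sub_neg.2 (hg hx hy h))
  · exact mul_pos (sub_pos.2 (hf hy hx h)) (sub_pos.2 (hg hy hx h))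

lemma StrictMonoOn.sub_mul_sub_nonneg {s : Set ℝ} {f g : ℝ → ℝ} (hf : StrictMonoOn f s)
    (hg : StrictMonoOn g s) {x y : ℝ} (hx : x ∈ s) (hy : y ∈ s) :
    0 ≤ (f x - f y) * (g x - g y) := by
  rcases eq_or_ne x y with rfl | hxy
  · simp
  · exact (hf.sub_mul_sub_pos hg hx hy hxy).le

lemma integral_prod_restrict_Ioi_pos {H : ℝ × ℝ → ℝ}
    (hH_int : Integrable H ((volume.restrict (Ioi 0)).prod (volume.restrict (Ioi 0))))
    (hH_nonneg : ∀ x ∈ Ioi (0 : ℝ), ∀ y ∈ Ioi (0 : ℝ), 0 ≤ H (x, y))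
    (hH_pos : ∀ x ∈ Ioi (0 : ℝ), ∀ y ∈ Ioi (0 : ℝ), x ≠ y → 0 < H (x, y)) :
    0 < ∫ p, H p ∂(volume.restrict (Ioi 0)).prod (volume.restrict (Ioi 0)) := by
  have hae : 0 ≤ᵐ[(volume.restrict (Ioi 0)).prod (volume.restrict (Ioi 0))] H := by
    rw [Measure.prod_restrict]
    exact (ae_restrict_iff' (measurableSet_Ioi.prod measurableSet_Ioi)).2
      (.of_forall fun p ⟨hx, hy⟩ ↦ hH_nonneg _ hx _ hy)
  rw [integral_pos_iff_support_of_nonneg_ae hae hH_int]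
  have hsupp : Ioo (1 : ℝ) 2 ×ˢ Ioo 3 4 ⊆ Function.support H := by
    rintro ⟨x, y⟩ ⟨hx, hy⟩
    exact (hH_pos x (one_pos.trans hx.1) y (three_pos.trans hy.1) (by linarith [hx.2, hy.1])).ne'
  refine lt_of_lt_of_le ?_ (measure_mono hsupp)
  rw [Measure.prod_prod, Measure.restrict_apply measurableSet_Ioo,
    Measure.restrict_apply measurableSet_Ioo,
    inter_eq_self_of_subset_left (Ioo_subset_Ioi_self.trans (Ioi_subset_Ioi zero_le_one)),
    inter_eq_self_of_subset_left (Ioo_subset_Ioi_self.trans (Ioi_subset_Ioi three_pos.le)),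
    volume_Ioo, volume_Ioo]
  norm_num

/-- Chebyshev's integral inequality for the weight `1 / W` on `(0, ∞)`. -/
lemma setIntegral_div_mul_setIntegral_div_lt {f g W : ℝ → ℝ} (hf : StrictMonoOn f (Ioi 0))
    (hg : StrictMonoOn g (Ioi 0)) (hW : ∀ x ∈ Ioi (0 : ℝ), 0 < W x)
    (hW_int : IntegrableOn (fun x ↦ 1 / W x) (Ioi 0))
    (hf_int : IntegrableOn (fun x ↦ f x / W x) (Ioi 0))
    (hg_int : IntegrableOn (fun x ↦ g x / W x) (Ioi 0))
    (hfg_int : IntegrableOn (fun x ↦ f x * g x / W x) (Ioi 0)) :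
    (∫ x in Ioi 0, f x / W x) * (∫ x in Ioi 0, g x / W x) <
      (∫ x in Ioi 0, 1 / W x) * ∫ x in Ioi 0, f x * g x / W x := by
  set H : ℝ × ℝ → ℝ := fun p ↦ (f p.1 - f p.2) * (g p.1 - g p.2) / (W p.1 * W p.2)
  have hH : H = fun p ↦ (f p.1 * g p.1 / W p.1) * (1 / W p.2)
      + (1 / W p.1) * (f p.2 * g p.2 / W p.2) - (f p.1 / W p.1) * (g p.2 / W p.2)
      - (g p.1 / W p.1) * (f p.2 / W p.2) := by
    ext p
    simp only [H, div_eq_mul_inv, mul_inv]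
    ring
  have i₁ := hfg_int.mul_prod hW_int
  have i₂ := hW_int.mul_prod hfg_int
  have i₃ := hf_int.mul_prod hg_int
  have i₄ := hg_int.mul_prod hf_int
  have hH_integral : ∫ p, H p ∂(volume.restrict (Ioi 0)).prod (volume.restrict (Ioi 0)) =
      2 * ((∫ x in Ioi 0, 1 / W x) * (∫ x in Ioi 0, f x * g x / W x)
        - (∫ x in Ioi 0, f x / W x) * (∫ x in Ioi 0, g x / W x)) := by
    simp only [hH]
    rw [integral_sub (by exact (i₁.add i₂).sub i₃) i₄, integral_sub (by exact i₁.add i₂) i₃,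
      integral_add i₁ i₂,
      integral_prod_mul (fun x ↦ f x * g x / W x) (fun x ↦ 1 / W x),
      integral_prod_mul (fun x ↦ 1 / W x) (fun x ↦ f x * g x / W x),
      integral_prod_mul (fun x ↦ f x / W x) (fun x ↦ g x / W x),
      integral_prod_mul (fun x ↦ g x / W x) (fun x ↦ f x / W x)]
    ring
  have hH_pos := integral_prod_restrict_Ioi_pos (H := H)
    (by rw [hH]; exact ((i₁.add i₂).sub i₃).sub i₄)
    (fun x hx y hy ↦ div_nonneg (hf.sub_mul_sub_nonneg hg hx hy) (mul_pos (hW x hx) (hW y hy)).le)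
    (fun x hx y hy hxy ↦ div_pos (hf.sub_mul_sub_pos hg hx hy hxy) (mul_pos (hW x hx) (hW y hy)))
  linarith

lemma abs_pow_le_mul_sq_add_one_rpow {d : ℝ} (hd : 0 < d) (x : ℝ) (k : ℕ) :
    |x| ^ k ≤ (√d ^ k)⁻¹ * (d * x ^ 2 + 1) ^ ((k : ℝ) / 2) := by
  have hsd : 0 < √d := sqrt_pos.mpr hd
  rw [le_inv_mul_iff₀ (by positivity), ← mul_pow]
  calc (√d * |x|) ^ k = (d * x ^ 2) ^ ((k : ℝ) / 2) := by
        rw [← sqrt_sq_eq_abs, ← sqrt_mul hd.le, sqrt_eq_rpow, ← rpow_natCast,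
          ← rpow_mul (by positivity)]
        ring_nf
    _ ≤ (d * x ^ 2 + 1) ^ ((k : ℝ) / 2) := by gcongr; linarith

lemma integrable_pow_div_of_rpow_le {d r : ℝ} {k : ℕ} {G : ℝ → ℝ} (hd : 0 < d)
    (hG : Measurable G) (hGlb : ∀ x, (d * x ^ 2 + 1) ^ r ≤ G x) (hkr : (k : ℝ) / 2 + 1 ≤ r) :
    Integrable fun x ↦ x ^ k / G x := by
  have hsd : 0 < √d := sqrt_pos.mpr hd
  refine ((integrable_inv_one_add_sq.comp_mul_left' hsd.ne').const_mul (√d ^ k)⁻¹).mono'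
    ((measurable_id.pow_const k).div hG).aestronglyMeasurable (.of_forall fun x ↦ ?_)
  have hu : 1 ≤ d * x ^ 2 + 1 := by nlinarith [sq_nonneg x]
  have hG0 : 0 < G x := (rpow_pos_of_pos (by linarith) r).trans_le (hGlb x)
  have hsq : 1 + (√d * x) ^ 2 = d * x ^ 2 + 1 := by rw [mul_pow, sq_sqrt hd.le]; ring
  rw [norm_div, norm_pow, norm_eq_abs, norm_of_nonneg hG0.le, hsq]
  calc |x| ^ k / G x
      ≤ (√d ^ k)⁻¹ * (d * x ^ 2 + 1) ^ ((k : ℝ) / 2) / (d * x ^ 2 + 1) ^ r := by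
        gcongr
        · exact abs_pow_le_mul_sq_add_one_rpow hd x k
        · exact hGlb x
    _ = (√d ^ k)⁻¹ * (d * x ^ 2 + 1) ^ ((k : ℝ) / 2 - r) := by
        rw [rpow_sub (by linarith), mul_div_assoc]
    _ ≤ (√d ^ k)⁻¹ * (d * x ^ 2 + 1) ^ (-1 : ℝ) := by gcongr; linarith
    _ = (√d ^ k)⁻¹ * (d * x ^ 2 + 1)⁻¹ := by rw [rpow_neg_one]

/-- `quadProd a⁻¹ b⁻¹ c⁻¹ t` is the product of the factors `t ^ 2 / a ^ 2 + 1` of the second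
variable. -/
def quadProd (a b c x : ℝ) : ℝ :=
  (a ^ 2 * x ^ 2 + 1) * (b ^ 2 * x ^ 2 + 1) * (c ^ 2 * x ^ 2 + 1)

lemma quadProd_pos (a b c x : ℝ) : 0 < quadProd a b c x := by unfold quadProd; positivity

lemma quadProd_neg (a b c x : ℝ) : quadProd a b c (-x) = quadProd a b c x := by
  simp only [quadProd, neg_sq]

lemma quadProd_inv_inv_inv {a b c x : ℝ} (ha : a ≠ 0) (hb : b ≠ 0) (hc : c ≠ 0) (hx : x ≠ 0) :
    quadProd a⁻¹ b⁻¹ c⁻¹ x⁻¹ = quadProd a b c x / ((a * b * c) ^ 2 * x ^ 6) := by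
  unfold quadProd
  field_simp
  ring

lemma quadProd_inv_inv_inv_rpow {a b c x : ℝ} (ha : 0 < a) (hb : 0 < b) (hc : 0 < c)
    (hx : 0 < x) :
    quadProd a⁻¹ b⁻¹ c⁻¹ x⁻¹ ^ (3 / 2 : ℝ) =
      quadProd a b c x ^ (3 / 2 : ℝ) / ((a * b * c) ^ 3 * x ^ 9) := by
  have hsq : (a * b * c) ^ 2 * x ^ 6 = ((a * b * c) * x ^ 3) ^ (2 : ℝ) := by
    rw [rpow_two]; ring
  rw [quadProd_inv_inv_inv ha.ne' hb.ne' hc.ne' hx.ne',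
    div_rpow (quadProd_pos a b c x).le (by positivity), hsq, ← rpow_mul (by positivity)]
  norm_num
  ring

lemma quadProd_pow_le (a b c x : ℝ) :
    (min (min (a ^ 2) (b ^ 2)) (c ^ 2) * x ^ 2 + 1) ^ 3 ≤ quadProd a b c x := by
  unfold quadProd
  rw [pow_three, ← mul_assoc]
  gcongr
  · exact (min_le_left _ _).trans (min_le_left _ _)
  · exact (min_le_left _ _).trans (min_le_right _ _)
  · exact min_le_right _ _

lemma integrable_pow_div_quadProd_rpow {a b c : ℝ} (ha : a ≠ 0) (hb : b ≠ 0) (hc : c ≠ 0) {k : ℕ}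
    (hk : k ≤ 7) : Integrable fun x ↦ x ^ k / quadProd a b c x ^ (3 / 2 : ℝ) := by
  set d := min (min (a ^ 2) (b ^ 2)) (c ^ 2)
  have hd : 0 < d := lt_min (lt_min (by positivity) (by positivity)) (by positivity)
  refine integrable_pow_div_of_rpow_le (r := 9 / 2) hd (by unfold quadProd; fun_prop)
    (fun x ↦ ?_) ?_
  · calc (d * x ^ 2 + 1) ^ (9 / 2 : ℝ) = ((d * x ^ 2 + 1) ^ 3) ^ (3 / 2 : ℝ) := by
          rw [← rpow_natCast _ 3, ← rpow_mul (by positivity)]; norm_num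
      _ ≤ quadProd a b c x ^ (3 / 2 : ℝ) := by gcongr; exact quadProd_pow_le a b c x
  · have : (k : ℝ) ≤ 7 := by exact_mod_cast hk
    linarith

lemma integrable_one_div_quadProd_rpow {a b c : ℝ} (ha : a ≠ 0) (hb : b ≠ 0) (hc : c ≠ 0) :
    Integrable fun x ↦ 1 / quadProd a b c x ^ (3 / 2 : ℝ) := by
  simpa using integrable_pow_div_quadProd_rpow ha hb hc (k := 0) (Nat.zero_le _)

lemma setIntegral_pow_div_quadProd_inv_rpow {a b c : ℝ} (ha : 0 < a) (hb : 0 < b) (hc : 0 < c)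
    {m n : ℕ} (hmn : m + n = 7) :
    ∫ t in Ioi 0, t ^ m / quadProd a⁻¹ b⁻¹ c⁻¹ t ^ (3 / 2 : ℝ) =
      (a * b * c) ^ 3 * ∫ x in Ioi 0, x ^ n / quadProd a b c x ^ (3 / 2 : ℝ) := by
  rw [← integral_comp_rpow_Ioi _ (p := -1) (by norm_num), ← integral_const_mul]
  refine setIntegral_congr_fun measurableSet_Ioi fun x (hx : 0 < x) ↦ ?_
  have h9 : x ^ 9 = x ^ 2 * x ^ m * x ^ n := by rw [← pow_add, ← pow_add]; congr 1; omega
  rw [rpow_neg_one, quadProd_inv_inv_inv_rpow ha hb hc hx, h9,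
    show (-1 : ℝ) - 1 = -(2 : ℕ) by norm_num, rpow_neg hx.le, rpow_natCast, smul_eq_mul, abs_neg,
    abs_one, one_mul, inv_pow]
  have := quadProd_pos a b c x
  field_simp

lemma integral_pow_div_quadProd_rpow_of_even {a b c : ℝ} {k : ℕ} (hk : Even k) :
    ∫ x, x ^ k / quadProd a b c x ^ (3 / 2 : ℝ) =
      2 * ∫ x in Ioi 0, x ^ k / quadProd a b c x ^ (3 / 2 : ℝ) :=
  integral_eq_two_mul_setIntegral_Ioi_of_even fun x ↦ by rw [hk.neg_pow, quadProd_neg]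

lemma integral_pow_div_quadProd_inv_rpow {a b c : ℝ} (ha : 0 < a) (hb : 0 < b) (hc : 0 < c)
    {m n : ℕ} (hm : Even m) (hmn : m + n = 7) :
    ∫ t, t ^ m / quadProd a⁻¹ b⁻¹ c⁻¹ t ^ (3 / 2 : ℝ) =
      2 * (a * b * c) ^ 3 * ∫ x in Ioi 0, x ^ n / quadProd a b c x ^ (3 / 2 : ℝ) := by
  rw [integral_pow_div_quadProd_rpow_of_even hm,
    setIntegral_pow_div_quadProd_inv_rpow ha hb hc hmn, ← mul_assoc]

lemma div_quadProd_mul_quadProd_inv_rpow (a b c s t : ℝ) :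
    (s ^ 2 * t ^ 2 - 1) /
        ((a ^ 2 * s ^ 2 + 1) * (b ^ 2 * s ^ 2 + 1) * (c ^ 2 * s ^ 2 + 1) *
          (t ^ 2 / a ^ 2 + 1) * (t ^ 2 / b ^ 2 + 1) * (t ^ 2 / c ^ 2 + 1)) ^ (3 / 2 : ℝ) =
      s ^ 2 / quadProd a b c s ^ (3 / 2 : ℝ) * (t ^ 2 / quadProd a⁻¹ b⁻¹ c⁻¹ t ^ (3 / 2 : ℝ)) -
        1 / quadProd a b c s ^ (3 / 2 : ℝ) * (1 / quadProd a⁻¹ b⁻¹ c⁻¹ t ^ (3 / 2 : ℝ)) := by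
  have hprod : (a ^ 2 * s ^ 2 + 1) * (b ^ 2 * s ^ 2 + 1) * (c ^ 2 * s ^ 2 + 1) *
      (t ^ 2 / a ^ 2 + 1) * (t ^ 2 / b ^ 2 + 1) * (t ^ 2 / c ^ 2 + 1) =
      quadProd a b c s * quadProd a⁻¹ b⁻¹ c⁻¹ t := by
    simp only [quadProd]; ring
  rw [hprod, mul_rpow (quadProd_pos a b c s).le (quadProd_pos _ _ _ t).le]
  field_simp

lemma setIntegral_quadProd_rpow_chebyshev {a b c : ℝ} (ha : a ≠ 0) (hb : b ≠ 0) (hc : c ≠ 0) :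
    (∫ x in Ioi 0, x ^ 2 / quadProd a b c x ^ (3 / 2 : ℝ)) *
        (∫ x in Ioi 0, x ^ 5 / quadProd a b c x ^ (3 / 2 : ℝ)) <
      (∫ x in Ioi 0, 1 / quadProd a b c x ^ (3 / 2 : ℝ)) *
        ∫ x in Ioi 0, x ^ 7 / quadProd a b c x ^ (3 / 2 : ℝ) := by
  have hI {k : ℕ} (hk : k ≤ 7) :=
    (integrable_pow_div_quadProd_rpow ha hb hc hk).integrableOn (s := Ioi 0)
  have hmono {n : ℕ} (hn : n ≠ 0) : StrictMonoOn (· ^ n : ℝ → ℝ) (Ioi 0) :=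
    (pow_left_strictMonoOn₀ hn).mono fun x (hx : 0 < x) ↦ hx.le
  have := setIntegral_div_mul_setIntegral_div_lt (hmono two_ne_zero)
    (hmono (n := 5) (by norm_num))
    (fun x _ ↦ rpow_pos_of_pos (quadProd_pos a b c x) _)
    (integrable_one_div_quadProd_rpow ha hb hc).integrableOn (hI (by norm_num)) (hI (by norm_num))
    (by simpa only [← pow_add] using hI (k := 7) le_rfl)
  simpa only [← pow_add] using this

theorem stmt_7 (a b c : ℝ) (hab : a > b) (hbc : b > c) (hc : c > 0) :
    (∫ s : ℝ, ∫ t : ℝ,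
        (s ^ 2 * t ^ 2 - 1) /
          ((a ^ 2 * s ^ 2 + 1) * (b ^ 2 * s ^ 2 + 1) * (c ^ 2 * s ^ 2 + 1) *
            (t ^ 2 / a ^ 2 + 1) * (t ^ 2 / b ^ 2 + 1) * (t ^ 2 / c ^ 2 + 1)) ^ (3 / 2 : ℝ)) < 0 := by
  have hb : 0 < b := hc.trans hbc
  have ha : 0 < a := hb.trans hab
  have hP₂ := integral_pow_div_quadProd_rpow_of_even (a := a) (b := b) (c := c) even_two
  have hP₀ : ∫ x, 1 / quadProd a b c x ^ (3 / 2 : ℝ) =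
      2 * ∫ x in Ioi 0, 1 / quadProd a b c x ^ (3 / 2 : ℝ) := by
    simpa using integral_pow_div_quadProd_rpow_of_even (a := a) (b := b) (c := c) Even.zero
  have hQ₂ := integral_pow_div_quadProd_inv_rpow ha hb hc even_two (n := 5) rfl
  have hQ₀ : ∫ t, 1 / quadProd a⁻¹ b⁻¹ c⁻¹ t ^ (3 / 2 : ℝ) =
      2 * (a * b * c) ^ 3 * ∫ x in Ioi 0, x ^ 7 / quadProd a b c x ^ (3 / 2 : ℝ) := by
    simpa using integral_pow_div_quadProd_inv_rpow ha hb hc Even.zero (n := 7) rfl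
  have ha' := inv_ne_zero ha.ne'
  have hb' := inv_ne_zero hb.ne'
  have hc' := inv_ne_zero hc.ne'
  simp only [div_quadProd_mul_quadProd_inv_rpow]
  rw [integral_integral_mul_sub_mul
      (integrable_pow_div_quadProd_rpow ha.ne' hb.ne' hc.ne' (by norm_num))
      (integrable_pow_div_quadProd_rpow ha' hb' hc' (by norm_num))
      (integrable_one_div_quadProd_rpow ha.ne' hb.ne' hc.ne')
      (integrable_one_div_quadProd_rpow ha' hb' hc'),
    hP₂, hP₀, hQ₂, hQ₀]
  nlinarith [setIntegral_quadProd_rpow_chebyshev ha.ne' hb.ne' hc.ne',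
    (by positivity : 0 < (a * b * c) ^ 3)]
end

section
/- Let V₁(a,b,c) = √(2π)·E[√(a²X²+b²Y²+c²Z²)] with X,Y,Z i.i.d. standard normal, viewed as a function on (0,∞)³. If a ≥ b ≥ c > 0 then ∂V₁/∂a ≥ ∂V₁/∂b ≥ ∂V₁/∂c, with strict inequality in the first place when a > b and in the second when b > c. -/
open MeasureTheory ProbabilityTheory

/-- `V₁(a,b,c) = √(2π)·E[√(a²X²+b²Y²+c²Z²)]`. -/
noncomputable def V1 (a b c : ℝ) : ℝ :=
  Real.sqrt (2 * Real.pi) *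
    ∫ p : ℝ × ℝ × ℝ,
      Real.sqrt (a ^ 2 * p.1 ^ 2 + b ^ 2 * p.2.1 ^ 2 + c ^ 2 * p.2.2 ^ 2) ∂gauss3

/-!
The `a`-derivative `a X² / √(a²X² + b²Y² + c²Z²)` of the integrand is dominated by `|X|`, so
`∂V₁/∂a (a, b, c) = √(2π) · V1Partial a b c`. The law of `(X, Y, Z)` is exchangeable, hence `V₁`
is symmetric and `∂V₁/∂b (a, b, c) = √(2π) · V1Partial b a c`. For `b ≤ a` the integrand of
`V1Partial b a c` is pointwise at most that of `V1Partial a b c`: after squaring, the difference is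
`(a⁴ - b⁴) Y² + (a² - b²) c² Z² ≥ 0`, positive where `X, Y ≠ 0` once `b < a`. Comparing `∂/∂b`
with `∂/∂c` is the same comparison after the relabelling `V₁(a, b, c) = V₁(b, c, a)`.
-/

lemma Real.sqrt_sq_mul_add_le {x u K : ℝ} (hK : 0 ≤ K) :
    √(x ^ 2 * u ^ 2 + K) ≤ |x| * |u| + √K := by
  rw [Real.sqrt_le_left (by positivity), add_sq, mul_pow, sq_abs, sq_abs, Real.sq_sqrt hK]
  have : 0 ≤ 2 * (|x| * |u|) * √K := by positivity
  linarith

lemma abs_mul_sq_div_sqrt_le (x u : ℝ) {K : ℝ} (hK : 0 ≤ K) :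
    |x * u ^ 2 / √(x ^ 2 * u ^ 2 + K)| ≤ |u| := by
  have hxu : |x| * |u| ≤ √(x ^ 2 * u ^ 2 + K) := by
    rw [← abs_mul, ← Real.sqrt_sq_eq_abs]
    exact Real.sqrt_le_sqrt (by nlinarith)
  rw [abs_div, abs_of_nonneg (Real.sqrt_nonneg _), abs_mul, abs_pow, sq]
  rcases (mul_nonneg (abs_nonneg x) (abs_nonneg u)).eq_or_lt with h0 | hpos
  · rw [← mul_assoc, ← h0, zero_mul, zero_div]; exact abs_nonneg u
  · rw [div_le_iff₀ (hpos.trans_le hxu)]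
    nlinarith [abs_nonneg u]

lemma hasDerivAt_sqrt_sq_mul_add {u K : ℝ} (hK : 0 < K) (x : ℝ) :
    HasDerivAt (fun y => √(y ^ 2 * u ^ 2 + K)) (x * u ^ 2 / √(x ^ 2 * u ^ 2 + K)) x := by
  have h := (((hasDerivAt_pow 2 x).mul_const (u ^ 2)).add_const K).sqrt (by positivity)
  convert h using 1
  field_simp
  ring

lemma mul_sqrt_le_mul_sqrt {s t A B : ℝ} (hs : 0 ≤ s) (ht : 0 ≤ t) (hA : 0 ≤ A) (hB : 0 ≤ B)
    (h : t ^ 2 * B ≤ s ^ 2 * A) : t * √B ≤ s * √A := by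
  rwa [← pow_le_pow_iff_left₀ (by positivity) (by positivity) two_ne_zero, mul_pow, mul_pow,
    Real.sq_sqrt hA, Real.sq_sqrt hB]

lemma mul_sqrt_lt_mul_sqrt {s t A B : ℝ} (hs : 0 ≤ s) (ht : 0 ≤ t) (hA : 0 ≤ A) (hB : 0 ≤ B)
    (h : t ^ 2 * B < s ^ 2 * A) : t * √B < s * √A := by
  rwa [← pow_lt_pow_iff_left₀ (by positivity) (by positivity) two_ne_zero, mul_pow, mul_pow,
    Real.sq_sqrt hA, Real.sq_sqrt hB]

lemma mul_sq_div_sqrt_le {r s t : ℝ} (ht : 0 < t) (hts : t ≤ s) (x y z : ℝ) :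
    t * x ^ 2 / √(t ^ 2 * x ^ 2 + (s ^ 2 * y ^ 2 + r ^ 2 * z ^ 2)) ≤
      s * x ^ 2 / √(s ^ 2 * x ^ 2 + (t ^ 2 * y ^ 2 + r ^ 2 * z ^ 2)) := by
  rcases eq_or_ne x 0 with rfl | hx
  · simp
  have hs : 0 < s := ht.trans_le hts
  have h2 : t ^ 2 ≤ s ^ 2 := pow_le_pow_left₀ ht.le hts 2
  have h4 : t ^ 4 ≤ s ^ 4 := pow_le_pow_left₀ ht.le hts 4
  have key := mul_sqrt_le_mul_sqrt hs.le ht.le (by positivity) (by positivity)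
    (show t ^ 2 * (s ^ 2 * x ^ 2 + (t ^ 2 * y ^ 2 + r ^ 2 * z ^ 2)) ≤
      s ^ 2 * (t ^ 2 * x ^ 2 + (s ^ 2 * y ^ 2 + r ^ 2 * z ^ 2)) by
      nlinarith [mul_le_mul_of_nonneg_right h4 (sq_nonneg y),
        mul_le_mul_of_nonneg_right h2 (mul_nonneg (sq_nonneg r) (sq_nonneg z))])
  rw [div_le_div_iff₀ (by positivity) (by positivity)]
  nlinarith [mul_le_mul_of_nonneg_left key (sq_nonneg x)]

lemma mul_sq_div_sqrt_lt {r s t x y : ℝ} (ht : 0 < t) (hts : t < s) (hx : x ≠ 0) (hy : y ≠ 0)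
    (z : ℝ) :
    t * x ^ 2 / √(t ^ 2 * x ^ 2 + (s ^ 2 * y ^ 2 + r ^ 2 * z ^ 2)) <
      s * x ^ 2 / √(s ^ 2 * x ^ 2 + (t ^ 2 * y ^ 2 + r ^ 2 * z ^ 2)) := by
  have hs : 0 < s := ht.trans hts
  have h2 : t ^ 2 ≤ s ^ 2 := pow_le_pow_left₀ ht.le hts.le 2
  have h4 : t ^ 4 < s ^ 4 := pow_lt_pow_left₀ hts ht.le four_ne_zero
  have key := mul_sqrt_lt_mul_sqrt hs.le ht.le (by positivity) (by positivity)
    (show t ^ 2 * (s ^ 2 * x ^ 2 + (t ^ 2 * y ^ 2 + r ^ 2 * z ^ 2)) <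
      s ^ 2 * (t ^ 2 * x ^ 2 + (s ^ 2 * y ^ 2 + r ^ 2 * z ^ 2)) by
      nlinarith [mul_lt_mul_of_pos_right h4 (sq_pos_of_ne_zero hy),
        mul_le_mul_of_nonneg_right h2 (mul_nonneg (sq_nonneg r) (sq_nonneg z))])
  rw [div_lt_div_iff₀ (by positivity) (by positivity)]
  nlinarith [mul_lt_mul_of_pos_left key (sq_pos_of_ne_zero hx)]

section

variable {α : Type*} [MeasurableSpace α] {μ : Measure α}

lemma hasDerivAt_integral_sqrt_sq_mul_add {u K : α → ℝ} (hu : Measurable u) (hK : Measurable K)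
    (hK_pos : ∀ᵐ p ∂μ, 0 < K p) (hu_int : Integrable u μ)
    (hK_int : Integrable (fun p => √(K p)) μ) (x₀ : ℝ) :
    HasDerivAt (fun x => ∫ p, √(x ^ 2 * u p ^ 2 + K p) ∂μ)
      (∫ p, x₀ * u p ^ 2 / √(x₀ ^ 2 * u p ^ 2 + K p) ∂μ) x₀ := by
  refine (hasDerivAt_integral_of_dominated_loc_of_deriv_le (bound := fun p => |u p|)
    (F := fun x p => √(x ^ 2 * u p ^ 2 + K p))
    (F' := fun x p => x * u p ^ 2 / √(x ^ 2 * u p ^ 2 + K p))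
    (Metric.ball_mem_nhds x₀ one_pos) (.of_forall fun x => by fun_prop) ?_
    (Measurable.aestronglyMeasurable (by fun_prop))
    ?_ hu_int.abs ?_).2
  · refine ((hu_int.abs.const_mul |x₀|).add hK_int).mono' (by fun_prop) ?_
    filter_upwards [hK_pos] with p hp
    rw [Real.norm_of_nonneg (Real.sqrt_nonneg _)]
    exact Real.sqrt_sq_mul_add_le hp.le
  · filter_upwards [hK_pos] with p hp x _
    exact abs_mul_sq_div_sqrt_le x (u p) hp.le
  · filter_upwards [hK_pos] with p hp x _
    exact hasDerivAt_sqrt_sq_mul_add hp x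

lemma integral_lt_integral_of_ae_lt [NeZero μ] {f g : α → ℝ} (hf : Integrable f μ)
    (hg : Integrable g μ) (h : ∀ᵐ p ∂μ, f p < g p) : ∫ p, f p ∂μ < ∫ p, g p ∂μ := by
  rw [← sub_pos, ← integral_sub hg hf, integral_pos_iff_support_of_nonneg_ae
    (h.mono fun p hp => (sub_pos.2 hp).le) (hg.sub hf), pos_iff_ne_zero]
  intro h0
  obtain ⟨p, hlt, hp⟩ := (h.and (measure_eq_zero_iff_ae_notMem.1 h0)).exists
  exact hp (sub_pos.2 hlt).ne'

lemma integrable_mul_sq_div_sqrt {u K : α → ℝ} (hu : Measurable u) (hK : Measurable K)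
    (hK_nonneg : ∀ᵐ p ∂μ, 0 ≤ K p) (hu_int : Integrable u μ) (x : ℝ) :
    Integrable (fun p => x * u p ^ 2 / √(x ^ 2 * u p ^ 2 + K p)) μ :=
  hu_int.abs.mono' (Measurable.aestronglyMeasurable (by fun_prop))
    (hK_nonneg.mono fun p hp => abs_mul_sq_div_sqrt_le x (u p) hp)

lemma integrable_sqrt_sq_mul_add_sq_mul {u v : α → ℝ} (hu : Measurable u) (hv : Measurable v)
    (hu_int : Integrable u μ) (hv_int : Integrable v μ) (s t : ℝ) :
    Integrable (fun p => √(s ^ 2 * u p ^ 2 + t ^ 2 * v p ^ 2)) μ := by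
  refine ((hu_int.abs.const_mul |s|).add (hv_int.abs.const_mul |t|)).mono' (by fun_prop)
    (.of_forall fun p => ?_)
  rw [Real.norm_of_nonneg (Real.sqrt_nonneg _), Pi.add_apply, ← abs_mul t,
    ← Real.sqrt_sq_eq_abs (t * v p), mul_pow]
  exact Real.sqrt_sq_mul_add_le (by positivity)

end

instance inst_s9 : IsProbabilityMeasure gauss3 := by unfold gauss3; infer_instance

lemma integrable_id_gaussianReal {m : ℝ} {v : NNReal} : Integrable id (gaussianReal m v) :=
  (memLp_id_gaussianReal 1).integrable le_rfl

lemma ae_gauss3_ne_zero : ∀ᵐ p ∂gauss3, p.1 ≠ 0 ∧ p.2.1 ≠ 0 ∧ p.2.2 ≠ 0 := by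
  have : NullSingletonClass (gaussianReal 0 1) := nullSingletonClass_gaussianReal one_ne_zero
  have h := Measure.ae_ne (gaussianReal 0 1) 0
  unfold gauss3
  filter_upwards [Measure.quasiMeasurePreserving_fst.ae h,
    (Measure.quasiMeasurePreserving_fst.comp Measure.quasiMeasurePreserving_snd).ae h,
    (Measure.quasiMeasurePreserving_snd.comp Measure.quasiMeasurePreserving_snd).ae h]
    with p h1 h2 h3 using ⟨h1, h2, h3⟩

lemma integral_gauss3_swap12 (f : ℝ × ℝ × ℝ → ℝ) :
    ∫ p, f (p.2.1, p.1, p.2.2) ∂gauss3 = ∫ p, f p ∂gauss3 := by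
  let e : ℝ × ℝ × ℝ ≃ᵐ ℝ × ℝ × ℝ := MeasurableEquiv.prodAssoc.symm.trans
    ((MeasurableEquiv.prodComm.prodCongr (MeasurableEquiv.refl ℝ)).trans
      MeasurableEquiv.prodAssoc)
  have he : MeasurePreserving e gauss3 gauss3 :=
    ((measurePreserving_prodAssoc _ _ _).symm _).trans
      ((Measure.measurePreserving_swap.prod (.id _)).trans (measurePreserving_prodAssoc _ _ _))
  exact he.integral_comp' f

lemma integral_gauss3_swap23 (f : ℝ × ℝ × ℝ → ℝ) :
    ∫ p, f (p.1, p.2.2, p.2.1) ∂gauss3 = ∫ p, f p ∂gauss3 := by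
  let e : ℝ × ℝ × ℝ ≃ᵐ ℝ × ℝ × ℝ := (MeasurableEquiv.refl ℝ).prodCongr MeasurableEquiv.prodComm
  have he : MeasurePreserving e gauss3 gauss3 :=
    (MeasurePreserving.id _).prod Measure.measurePreserving_swap
  exact he.integral_comp' f

lemma V1_swap12 (a b c : ℝ) : V1 a b c = V1 b a c := by
  rw [V1, V1, ← integral_gauss3_swap12]
  simp only [add_comm (a ^ 2 * _)]

lemma V1_swap23 (a b c : ℝ) : V1 a b c = V1 a c b := by
  rw [V1, V1, ← integral_gauss3_swap23]
  simp only [add_assoc, add_comm (b ^ 2 * _)]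

noncomputable def V1Partial (a b c : ℝ) : ℝ :=
  ∫ p : ℝ × ℝ × ℝ,
    a * p.1 ^ 2 / √(a ^ 2 * p.1 ^ 2 + (b ^ 2 * p.2.1 ^ 2 + c ^ 2 * p.2.2 ^ 2)) ∂gauss3

lemma hasDerivAt_V1_fst (a b : ℝ) {c : ℝ} (hc : c ≠ 0) :
    HasDerivAt (fun x => V1 x b c) (√(2 * Real.pi) * V1Partial a b c) a := by
  have hK_pos : ∀ᵐ p ∂gauss3, 0 < b ^ 2 * p.2.1 ^ 2 + c ^ 2 * p.2.2 ^ 2 :=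
    ae_gauss3_ne_zero.mono fun p ⟨_, _, hz⟩ => by positivity
  have h := hasDerivAt_integral_sqrt_sq_mul_add measurable_fst (by fun_prop) hK_pos
    (integrable_id_gaussianReal.comp_fst _)
    (integrable_sqrt_sq_mul_add_sq_mul (by fun_prop) (by fun_prop)
      ((integrable_id_gaussianReal.comp_fst _).comp_snd _)
      ((integrable_id_gaussianReal.comp_snd _).comp_snd _) b c) a
  simpa only [V1, V1Partial, add_assoc] using h.const_mul (√(2 * Real.pi))

lemma integrable_V1Partial_integrand (a b c : ℝ) : Integrable (fun p : ℝ × ℝ × ℝ =>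
    a * p.1 ^ 2 / √(a ^ 2 * p.1 ^ 2 + (b ^ 2 * p.2.1 ^ 2 + c ^ 2 * p.2.2 ^ 2))) gauss3 :=
  integrable_mul_sq_div_sqrt measurable_fst (by fun_prop) (.of_forall fun _ => by positivity)
    (integrable_id_gaussianReal.comp_fst _) a

lemma V1Partial_le {r s t : ℝ} (ht : 0 < t) (hts : t ≤ s) : V1Partial t s r ≤ V1Partial s t r :=
  integral_mono (integrable_V1Partial_integrand t s r) (integrable_V1Partial_integrand s t r)
    fun _ => mul_sq_div_sqrt_le ht hts _ _ _

lemma V1Partial_lt {r s t : ℝ} (ht : 0 < t) (hts : t < s) : V1Partial t s r < V1Partial s t r :=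
  integral_lt_integral_of_ae_lt (integrable_V1Partial_integrand t s r)
    (integrable_V1Partial_integrand s t r)
    (ae_gauss3_ne_zero.mono fun _ ⟨hx, hy, _⟩ => mul_sq_div_sqrt_lt ht hts hx hy _)

lemma deriv_V1_snd (a b : ℝ) {c : ℝ} (hc : c ≠ 0) :
    deriv (fun y => V1 a y c) b = √(2 * Real.pi) * V1Partial b a c := by
  simp only [V1_swap12 a]
  exact (hasDerivAt_V1_fst b a hc).deriv

lemma deriv_V1_snd_le_deriv_V1_fst {r s t : ℝ} (ht : 0 < t) (hts : t ≤ s) (hr : r ≠ 0) :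
    deriv (fun y => V1 s y r) t ≤ deriv (fun x => V1 x t r) s := by
  rw [deriv_V1_snd s t hr, (hasDerivAt_V1_fst s t hr).deriv]
  exact mul_le_mul_of_nonneg_left (V1Partial_le ht hts) (Real.sqrt_nonneg _)

lemma deriv_V1_snd_lt_deriv_V1_fst {r s t : ℝ} (ht : 0 < t) (hts : t < s) (hr : r ≠ 0) :
    deriv (fun y => V1 s y r) t < deriv (fun x => V1 x t r) s := by
  rw [deriv_V1_snd s t hr, (hasDerivAt_V1_fst s t hr).deriv]
  exact mul_lt_mul_of_pos_left (V1Partial_lt ht hts) (by positivity)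

theorem stmt_9 (a b c : ℝ) (hab : a ≥ b) (hbc : b ≥ c) (hc : c > 0) :
    deriv (fun x => V1 x b c) a ≥ deriv (fun y => V1 a y c) b ∧
    deriv (fun y => V1 a y c) b ≥ deriv (fun z => V1 a b z) c ∧
    (a > b → deriv (fun x => V1 x b c) a > deriv (fun y => V1 a y c) b) ∧
    (b > c → deriv (fun y => V1 a y c) b > deriv (fun z => V1 a b z) c) := by
  have hb : 0 < b := hc.trans_le hbc
  have ha : 0 < a := hb.trans_le hab
  have h_rotate_b : deriv (fun y => V1 a y c) b = deriv (fun y => V1 y c a) b := by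
    congr 1; funext y; rw [V1_swap12, V1_swap23]
  have h_rotate_c : deriv (fun z => V1 a b z) c = deriv (fun z => V1 b z a) c := by
    congr 1; funext z; rw [V1_swap12, V1_swap23]
  refine ⟨deriv_V1_snd_le_deriv_V1_fst hb hab hc.ne', ?_,
    fun h => deriv_V1_snd_lt_deriv_V1_fst hb h hc.ne', fun h => ?_⟩ <;>
    rw [h_rotate_b, h_rotate_c]
  · exact deriv_V1_snd_le_deriv_V1_fst hc hbc ha.ne'
  · exact deriv_V1_snd_lt_deriv_V1_fst hc h ha.ne'
end
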